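/- Let G = (V, E) be an undirected graph with V = {1, …, M} and M ≥ 2, and let Γ(G) be the delegation instance constructed from G. If G contains an independent set of size at least M^{2/3}, then Γ(G) admits a feasible direct menu of deterministic payment schemes whose service provider expected utility is at least β·M^{5/3}. -/
import Mathlib


open Finset

section Menus

variable {Θ Ω A : Type*}

/-- Expected payment `F_a^⊤ p` of the payment vector `p` under action `a`. -/
def ep [Fintype Ω] (F : A → Ω → ℝ) (a : A) (p : Ω → ℝ) : ℝ :=
  ∑ ω, F a ω * p ω

/-- The set `Π_a` of IC (nonnegative) payment vectors for action `a`, for the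
instance with outcome distributions `F` and costs `c`. -/
def icPayments [Fintype Ω] (F : A → Ω → ℝ) (c : A → ℝ) (a : A) : Set (Ω → ℝ) :=
  {p | (∀ ω, 0 ≤ p ω) ∧ ∀ a', ep F a p - c a ≥ ep F a' p - c a'}

/-- User utility of type `θ` for a direct-menu option (`none` is the opt-out pair,
interpreted as `F = 0`, cost `0`, payment `0`). -/
def optU [Fintype Ω] (F : A → Ω → ℝ) (R : Θ → Ω → ℝ) (θ : Θ)
    (o : Option (A × (Ω → ℝ))) : ℝ :=
  o.elim 0 fun ap => ep F ap.1 fun ω => R θ ω - ap.2 ω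

/-- Provider utility of a direct-menu option. -/
def optV [Fintype Ω] (F : A → Ω → ℝ) (c : A → ℝ) (o : Option (A × (Ω → ℝ))) : ℝ :=
  o.elim 0 fun ap => ep F ap.1 ap.2 - c ap.1

/-- A feasible direct menu: provider IC, user IC and user IR. -/
def DirectFeasible [Fintype Ω] (F : A → Ω → ℝ) (R : Θ → Ω → ℝ) (c : A → ℝ)
    (m : Θ → Option (A × (Ω → ℝ))) : Prop :=
  (∀ θ, (m θ).elim True fun ap => ap.2 ∈ icPayments F c ap.1) ∧
  (∀ θ θ', optU F R θ (m θ') ≤ optU F R θ (m θ)) ∧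
  (∀ θ, 0 ≤ optU F R θ (m θ))

/-- Expected provider utility of a direct menu under the type distribution `ξ`. -/
def directValue [Fintype Θ] [Fintype Ω] (ξ : Θ → ℝ) (F : A → Ω → ℝ) (c : A → ℝ)
    (m : Θ → Option (A × (Ω → ℝ))) : ℝ :=
  ∑ θ, ξ θ * optV F c (m θ)

end Menus

section GraphInstance

/-- The exponent `M·v + i` (with `1`-based labels `v, i ∈ {1, …, M}`) associated to the
pair index `(v, i)` in the instance `Γ(G)`. -/
def gExp (M : ℕ) (vi : Fin M × Fin M) : ℕ :=
  M * (vi.1.val + 1) + (vi.2.val + 1)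

/-- Outcome distributions of `Γ(G)`: action `a_{v,i}` is a Dirac on outcome `ω_{v,i}`. -/
def gF (M : ℕ) : (Fin M × Fin M) → (Fin M × Fin M) → ℝ :=
  fun a ω => if ω = a then 1 else 0

/-- Rewards of `Γ(G)`: type `θ_{v,i}` has reward `M^{−Mv−i}` on outcome `ω_{w,j}` iff
`(w = v ∧ j = i)` or (`(v,w) ∈ E` and `v < w`), and `0` otherwise. -/
noncomputable def gR (M : ℕ) (G : SimpleGraph (Fin M)) [DecidableRel G.Adj] :
    (Fin M × Fin M) → (Fin M × Fin M) → ℝ :=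
  fun θ ω =>
    if (ω.1 = θ.1 ∧ ω.2 = θ.2) ∨ (G.Adj θ.1 ω.1 ∧ θ.1 < ω.1) then
      ((M : ℝ) ^ (gExp M θ))⁻¹
    else 0

/-- The normalizing constant `β` of `Γ(G)`. -/
noncomputable def gbeta (M : ℕ) : ℝ :=
  (∑ vi : Fin M × Fin M, (M : ℝ) ^ (gExp M vi))⁻¹

/-- Type distribution of `Γ(G)`: `ξ_{θ_{v,i}} = β · M^{Mv+i}`. -/
noncomputable def gxi (M : ℕ) (θ : Fin M × Fin M) : ℝ :=
  gbeta M * (M : ℝ) ^ (gExp M θ)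

/-- Costs of `Γ(G)` are identically `0`. -/
def gc (M : ℕ) : (Fin M × Fin M) → ℝ := fun _ => 0

end GraphInstance

/- ### Auxiliary material -/

/-- The reward magnitude of a type. -/
noncomputable def gr (M : ℕ) (θ : Fin M × Fin M) : ℝ := ((M : ℝ) ^ (gExp M θ))⁻¹

/-- The payment vector extracting `gr M t` on outcome `t`. -/
noncomputable def gpay (M : ℕ) (t : Fin M × Fin M) : (Fin M × Fin M) → ℝ :=
  fun ω => if ω = t then gr M t else 0

/-- The target assignment of the menu. -/
noncomputable def menuTgt (M : ℕ) (G : SimpleGraph (Fin M)) [DecidableRel G.Adj]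
    (S : Finset (Fin M)) (L : Fin M) (θ : Fin M × Fin M) : Option (Fin M × Fin M) :=
  if θ.1 ∈ S then some θ
  else if h : (S.filter fun v => G.Adj θ.1 v ∧ θ.1 < v).Nonempty then
    some ((S.filter fun v => G.Adj θ.1 v ∧ θ.1 < v).max' h, L)
  else none

lemma gExp_lt_aux {M : ℕ} (a c b d : Fin M) (h : a.val < c.val) :
    gExp M (a, b) < gExp M (c, d) := by
  unfold gExp
  simp only
  have hb : b.val + 1 ≤ M := b.isLt
  have hac : a.val + 2 ≤ c.val + 1 := by omega
  calc M * (a.val + 1) + (b.val + 1) ≤ M * (a.val + 1) + M := by omega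
    _ = M * (a.val + 2) := by ring
    _ ≤ M * (c.val + 1) := Nat.mul_le_mul_left _ hac
    _ < M * (c.val + 1) + (d.val + 1) := by omega

lemma gExp_le_aux {M : ℕ} (hM : 1 ≤ M) (a c b : Fin M) (h : a.val ≤ c.val) :
    gExp M (a, b) ≤ gExp M (c, (⟨M - 1, by omega⟩ : Fin M)) := by
  unfold gExp
  simp only
  have hb : b.val + 1 ≤ M := b.isLt
  have h1 : M - 1 + 1 = M := by omega
  rw [h1]
  have h2 : M * (a.val + 1) ≤ M * (c.val + 1) :=
    Nat.mul_le_mul_left M (by omega)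
  omega

lemma ep_gF (M : ℕ) (a : Fin M × Fin M) (p : (Fin M × Fin M) → ℝ) :
    ep (gF M) a p = p a := by
  unfold ep gF
  rw [Finset.sum_eq_single a]
  · simp
  · intro b _ hb; simp [hb]
  · intro h; exact absurd (Finset.mem_univ a) h

lemma optU_some (M : ℕ) (G : SimpleGraph (Fin M)) [DecidableRel G.Adj]
    (θ : Fin M × Fin M) (o : (Fin M × Fin M) × ((Fin M × Fin M) → ℝ)) :
    optU (gF M) (gR M G) θ (some o) = gR M G θ o.1 - o.2 o.1 := by
  simp [optU, ep_gF]

lemma optV_some (M : ℕ) (o : (Fin M × Fin M) × ((Fin M × Fin M) → ℝ)) :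
    optV (gF M) (gc M) (some o) = o.2 o.1 := by
  simp [optV, ep_gF, gc]

/-- Soundness of the reduction: if `G` has an independent set of size at least
`M^{2/3}`, then the instance `Γ(G)` admits a feasible direct menu of deterministic
payment schemes with provider expected utility at least `β · M^{5/3}`. -/
theorem stmt18 (M : ℕ) (hM : 2 ≤ M) (G : SimpleGraph (Fin M)) [DecidableRel G.Adj]
    (S : Finset (Fin M)) (hind : ∀ v ∈ S, ∀ w ∈ S, ¬ G.Adj v w)
    (hcard : (M : ℝ) ^ ((2 : ℝ) / 3) ≤ (S.card : ℝ)) :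
    ∃ m : (Fin M × Fin M) → Option ((Fin M × Fin M) × ((Fin M × Fin M) → ℝ)),
      DirectFeasible (gF M) (gR M G) (gc M) m ∧
      gbeta M * (M : ℝ) ^ ((5 : ℝ) / 3) ≤ directValue (gxi M) (gF M) (gc M) m := by
  classical
  have hM0 : (0 : ℝ) < M := by
    have : (0 : ℕ) < M := by omega
    exact_mod_cast this
  have hM1 : (1 : ℝ) ≤ M := by
    have : (1 : ℕ) ≤ M := by omega
    exact_mod_cast this
  set L : Fin M := ⟨M - 1, by omega⟩ with hLdef
  set m : (Fin M × Fin M) → Option ((Fin M × Fin M) × ((Fin M × Fin M) → ℝ)) :=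
    fun θ => (menuTgt M G S L θ).map fun t => (t, gpay M t) with hmdef
  have hrpos : ∀ θ : Fin M × Fin M, 0 < gr M θ := by
    intro θ; unfold gr; positivity
  have hrmono : ∀ s t : Fin M × Fin M, gExp M s ≤ gExp M t → gr M t ≤ gr M s := by
    intro s t h
    unfold gr
    have h1 : (0 : ℝ) < (M : ℝ) ^ gExp M s := by positivity
    have h2 : (M : ℝ) ^ gExp M s ≤ (M : ℝ) ^ gExp M t := pow_le_pow_right₀ hM1 h
    exact inv_anti₀ h1 h2
  -- membership of targets in S
  have htgtS : ∀ θ t, menuTgt M G S L θ = some t → t.1 ∈ S := by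
    intro θ t h
    unfold menuTgt at h
    by_cases h1 : θ.1 ∈ S
    · rw [if_pos h1] at h
      obtain rfl : θ = t := by injection h
      exact h1
    · rw [if_neg h1] at h
      by_cases h2 : (S.filter fun v => G.Adj θ.1 v ∧ θ.1 < v).Nonempty
      · rw [dif_pos h2] at h
        obtain rfl : ((S.filter fun v => G.Adj θ.1 v ∧ θ.1 < v).max' h2, L) = t := by
          injection h
        exact (Finset.mem_filter.mp (Finset.max'_mem _ h2)).1
      · rw [dif_neg h2] at h; exact absurd h (by simp)
  -- user utility of an option with target t
  have hUt : ∀ θ t, optU (gF M) (gR M G) θ (some (t, gpay M t)) = gR M G θ t - gr M t := by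
    intro θ t
    rw [optU_some]
    simp [gpay]
  -- utility at own assignment in the three cases
  have hself : ∀ θ, θ.1 ∈ S → optU (gF M) (gR M G) θ (m θ) = 0 := by
    intro θ hθ
    have htg : menuTgt M G S L θ = some θ := by unfold menuTgt; rw [if_pos hθ]
    have hmθ : m θ = some (θ, gpay M θ) := by rw [hmdef]; simp [htg]
    rw [hmθ, hUt]
    have : gR M G θ θ = gr M θ := by unfold gR gr; simp
    rw [this]; ring
  have hnb : ∀ θ : Fin M × Fin M, θ.1 ∉ S →
      ∀ h2 : (S.filter fun v => G.Adj θ.1 v ∧ θ.1 < v).Nonempty,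
      optU (gF M) (gR M G) θ (m θ)
        = gr M θ - gr M ((S.filter fun v => G.Adj θ.1 v ∧ θ.1 < v).max' h2, L) := by
    intro θ h1 h2
    set v := (S.filter fun v => G.Adj θ.1 v ∧ θ.1 < v).max' h2 with hv
    have hvmem := Finset.mem_filter.mp (Finset.max'_mem _ h2)
    have htg : menuTgt M G S L θ = some (v, L) := by
      unfold menuTgt; rw [if_neg h1, dif_pos h2]
    have hmθ : m θ = some ((v, L), gpay M (v, L)) := by rw [hmdef]; simp [htg]
    rw [hmθ, hUt]
    have : gR M G θ (v, L) = gr M θ := by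
      unfold gR gr
      rw [if_pos]
      right
      exact ⟨hvmem.2.1, hvmem.2.2⟩
    rw [this]
  have hnone : ∀ θ : Fin M × Fin M, θ.1 ∉ S →
      ¬ (S.filter fun v => G.Adj θ.1 v ∧ θ.1 < v).Nonempty →
      optU (gF M) (gR M G) θ (m θ) = 0 := by
    intro θ h1 h2
    have htg : menuTgt M G S L θ = none := by unfold menuTgt; rw [if_neg h1, dif_neg h2]
    have hmθ : m θ = none := by rw [hmdef]; simp [htg]
    rw [hmθ]; simp [optU]
  -- IR: own utility nonnegative
  have hIR : ∀ θ, 0 ≤ optU (gF M) (gR M G) θ (m θ) := by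
    intro θ
    by_cases h1 : θ.1 ∈ S
    · rw [hself θ h1]
    · by_cases h2 : (S.filter fun v => G.Adj θ.1 v ∧ θ.1 < v).Nonempty
      · rw [hnb θ h1 h2]
        set v := (S.filter fun v => G.Adj θ.1 v ∧ θ.1 < v).max' h2 with hv
        have hvmem := Finset.mem_filter.mp (Finset.max'_mem _ h2)
        have hlt : gExp M θ < gExp M (v, L) := by
          have : θ.1.val < v.val := hvmem.2.2
          have := gExp_lt_aux θ.1 v θ.2 L this
          simpa using this
        have := hrmono θ (v, L) (le_of_lt hlt)
        linarith
      · rw [hnone θ h1 h2]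
  -- key deviation bound
  have hkey : ∀ θ t, t.1 ∈ S →
      gR M G θ t - gr M t ≤ optU (gF M) (gR M G) θ (m θ) := by
    intro θ t htS
    by_cases hc : (t.1 = θ.1 ∧ t.2 = θ.2) ∨ (G.Adj θ.1 t.1 ∧ θ.1 < t.1)
    · rcases hc with ⟨h1, h2⟩ | ⟨h1, h2⟩
      · -- t = θ
        obtain rfl : θ = t := (Prod.ext_iff.mpr ⟨h1, h2⟩).symm
        rw [hself θ htS]
        have : gR M G θ θ = gr M θ := by unfold gR gr; simp
        rw [this]; linarith
      · -- adjacency deviation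
        have hRt : gR M G θ t = gr M θ := by
          unfold gR gr; rw [if_pos (Or.inr ⟨h1, h2⟩)]
        rw [hRt]
        by_cases hθS : θ.1 ∈ S
        · exact absurd h1 (hind θ.1 hθS t.1 htS)
        · have h2' : (S.filter fun v => G.Adj θ.1 v ∧ θ.1 < v).Nonempty :=
            ⟨t.1, Finset.mem_filter.mpr ⟨htS, h1, h2⟩⟩
          rw [hnb θ hθS h2']
          set v := (S.filter fun v => G.Adj θ.1 v ∧ θ.1 < v).max' h2' with hv
          have hle : t.1.val ≤ v.val :=
            Finset.le_max' _ t.1 (Finset.mem_filter.mpr ⟨htS, h1, h2⟩)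
          have hge : gExp M t ≤ gExp M (v, L) := by
            have := gExp_le_aux (by omega : 1 ≤ M) t.1 v t.2 hle
            simpa [hLdef] using this
          have := hrmono t (v, L) hge
          linarith
    · have : gR M G θ t = 0 := by unfold gR; rw [if_neg hc]
      rw [this]
      have := hrpos t
      have := hIR θ
      linarith
  refine ⟨m, ⟨?_, ?_, hIR⟩, ?_⟩
  · -- provider IC
    intro θ
    cases h : menuTgt M G S L θ with
    | none =>
      have hmθ : m θ = none := by rw [hmdef]; simp [h]
      rw [hmθ]
      exact trivial
    | some t =>
      have hmθ : m θ = some (t, gpay M t) := by rw [hmdef]; simp [h]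
      rw [hmθ]
      refine ⟨fun ω => ?_, fun a' => ?_⟩
      · show (0:ℝ) ≤ gpay M t ω
        unfold gpay
        split
        · exact le_of_lt (hrpos t)
        · exact le_refl 0
      · show ep (gF M) t (gpay M t) - gc M t ≥ ep (gF M) a' (gpay M t) - gc M a'
        rw [ep_gF, ep_gF]
        unfold gc gpay
        simp only [sub_zero, ge_iff_le, if_pos rfl]
        split
        · exact le_refl _
        · exact le_of_lt (hrpos t)
  · -- user IC
    intro θ θ'
    cases h : menuTgt M G S L θ' with
    | none =>
      have hmθ : m θ' = none := by rw [hmdef]; simp [h]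
      rw [hmθ]
      simpa [optU] using hIR θ
    | some t =>
      have hmθ : m θ' = some (t, gpay M t) := by rw [hmdef]; simp [h]
      rw [hmθ, hUt]
      exact hkey θ t (htgtS θ' t h)
  · -- value bound
    have hterm0 : ∀ θ, 0 ≤ gxi M θ * optV (gF M) (gc M) (m θ) := by
      intro θ
      apply mul_nonneg
      · unfold gxi gbeta
        have hsum : (0 : ℝ) < ∑ vi : Fin M × Fin M, (M : ℝ) ^ (gExp M vi) := by
          apply Finset.sum_pos
          · intro i _
            exact pow_pos hM0 _
          · have : Nonempty (Fin M × Fin M) :=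
              ⟨(⟨0, by omega⟩, ⟨0, by omega⟩)⟩
            exact Finset.univ_nonempty
        exact le_of_lt (mul_pos (inv_pos.mpr hsum) (pow_pos hM0 _))
      · cases h : menuTgt M G S L θ with
        | none =>
          have hmθ : m θ = none := by rw [hmdef]; simp [h]
          rw [hmθ]; simp [optV]
        | some t =>
          have hmθ : m θ = some (t, gpay M t) := by rw [hmdef]; simp [h]
          rw [hmθ, optV_some]
          simp only [gpay, if_pos rfl]
          exact le_of_lt (hrpos t)
    have hbeta_pos : (0 : ℝ) < gbeta M := by
      unfold gbeta
      have hsum : (0 : ℝ) < ∑ vi : Fin M × Fin M, (M : ℝ) ^ (gExp M vi) := by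
        apply Finset.sum_pos
        · intro i _
          exact pow_pos hM0 _
        · have : Nonempty (Fin M × Fin M) := ⟨(⟨0, by omega⟩, ⟨0, by omega⟩)⟩
          exact Finset.univ_nonempty
      exact inv_pos.mpr hsum
    have htermS : ∀ θ : Fin M × Fin M, θ.1 ∈ S →
        gxi M θ * optV (gF M) (gc M) (m θ) = gbeta M := by
      intro θ hθ
      have htg : menuTgt M G S L θ = some θ := by unfold menuTgt; rw [if_pos hθ]
      have hmθ : m θ = some (θ, gpay M θ) := by rw [hmdef]; simp [htg]
      rw [hmθ, optV_some]
      have hg : gpay M θ θ = gr M θ := by simp [gpay]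
      dsimp only
      rw [hg]
      unfold gxi gr
      rw [mul_assoc, mul_inv_cancel₀ (by positivity : ((M:ℝ) ^ gExp M θ) ≠ 0), mul_one]
    -- sum over the S-part
    have hsub : ∑ θ ∈ Finset.univ.filter (fun θ : Fin M × Fin M => θ.1 ∈ S),
        gxi M θ * optV (gF M) (gc M) (m θ) ≤ directValue (gxi M) (gF M) (gc M) m := by
      unfold directValue
      apply Finset.sum_le_sum_of_subset_of_nonneg (Finset.filter_subset _ _)
      intro θ _ _
      exact hterm0 θ
    have hSsum : ∑ θ ∈ Finset.univ.filter (fun θ : Fin M × Fin M => θ.1 ∈ S),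
        gxi M θ * optV (gF M) (gc M) (m θ) = (S.card * M : ℝ) * gbeta M := by
      rw [Finset.sum_congr rfl (fun θ hθ => htermS θ (Finset.mem_filter.mp hθ).2)]
      rw [Finset.sum_const]
      have hfil : Finset.univ.filter (fun θ : Fin M × Fin M => θ.1 ∈ S)
          = S ×ˢ (Finset.univ : Finset (Fin M)) := by
        ext ⟨a, b⟩; simp
      rw [hfil, Finset.card_product, Finset.card_univ, Fintype.card_fin]
      rw [nsmul_eq_mul]
      push_cast
      ring
    have hpow : (M : ℝ) ^ ((5 : ℝ) / 3) ≤ (S.card : ℝ) * M := by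
      have h53 : ((5 : ℝ) / 3) = 2 / 3 + 1 := by norm_num
      rw [h53, Real.rpow_add hM0, Real.rpow_one]
      exact mul_le_mul_of_nonneg_right hcard (le_of_lt hM0)
    calc gbeta M * (M : ℝ) ^ ((5 : ℝ) / 3)
        ≤ gbeta M * ((S.card : ℝ) * M) :=
          mul_le_mul_of_nonneg_left hpow (le_of_lt hbeta_pos)
      _ = (S.card * M : ℝ) * gbeta M := by ring
      _ = _ := hSsum.symm
      _ ≤ _ := hsub
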